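/- arXiv:1912.02453 — 2 statements merged into one kernel-verified Lean document; each statement's English description precedes it below -/
import Mathlib

section
/- Let S : X → ℝ^q on a normed space X satisfy: for every x ∈ X and ρ > 0 there exists L > 0 such that ‖S(x₁) − S(x₂)‖ ≤ L‖S(x₁ − x₂)‖ whenever ‖xᵢ − x‖ < ρ (i = 1,2). Suppose further there exists γ ∈ C¹([0,∞);ℝ) with γ(0) = 0 and ‖S(z(t))‖ ≤ γ(sup_{s≤t}‖ζ(s)‖) whenever z is a mild solution driven by input ζ. Then for two mild solutions x₁, x₂ driven by inputs ζ₁, ζ₂ that coincide up to time t and stay δ-close to a reference afterwards, one has for s ∈ [t, t+τ]: ‖S(x₁(s)) − S(x₂(s))‖ ≤ L·(sup_{σ∈[0,2δ]}|γ′(σ)|)·‖(ζ₁−ζ₂)|_{[t,t+τ]}‖_∞. -/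
/-!
By linearity, `x₁ - x₂` is the solution driven by `ζ₁ - ζ₂`. This input vanishes on `[-h, t]`
and is bounded by `2δ` on `[t, t + τ]`, so its supremum `M` over `[-h, s]` lies in `[0, 2δ]` and
is at most its supremum over `[t, t + τ]`. The generalized Lipschitz property, the BIBO bound and
the mean value inequality `γ M ≤ (sup_{[0,2δ]} |γ'|) M` then chain together.
-/

open Set

theorem ContDiff.le_iSup_abs_deriv_mul {γ : ℝ → ℝ} (hγ : ContDiff ℝ 1 γ) (hγ0 : γ 0 = 0)
    {a r : ℝ} (hr : r ∈ Icc 0 a) :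
    γ r ≤ (⨆ σ : Icc 0 a, |deriv γ σ|) * r := by
  have hbdd : BddAbove (range fun σ : Icc 0 a => |deriv γ σ|) := by
    simpa only [image_eq_range] using
      isCompact_Icc.bddAbove_image (hγ.continuous_deriv le_rfl).abs.continuousOn (K := Icc 0 a)
  have hmvt := (convex_Icc 0 a).norm_image_sub_le_of_norm_deriv_le
    (fun x _ => (hγ.differentiable one_ne_zero) x)
    (fun x hx => (le_ciSup hbdd ⟨x, hx⟩ : |deriv γ x| ≤ _)) ⟨le_rfl, hr.1.trans hr.2⟩ hr
  rw [hγ0, sub_zero, sub_zero, Real.norm_eq_abs, Real.norm_eq_abs, abs_of_nonneg hr.1] at hmvt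
  exact (le_abs_self _).trans hmvt

theorem iSup_Icc_le_of_eq_zero_of_le {g : ℝ → ℝ} {a t s b c : ℝ}
    (hzero : ∀ σ ∈ Icc a t, g σ = 0) (hle : ∀ σ ∈ Icc t b, g σ ≤ c) (hc : 0 ≤ c) (hs : s ≤ b) :
    ⨆ σ : Icc a s, g σ ≤ c := by
  refine Real.iSup_le (fun ⟨σ, hσa, hσs⟩ => ?_) hc
  rcases le_total σ t with hσt | hσt
  · exact (hzero σ ⟨hσa, hσt⟩).trans_le hc
  · exact hle σ ⟨hσt, hσs.trans hs⟩

theorem nonlinear_observation_Lipschitz_estimate_general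
    {X : Type*} [NormedAddCommGroup X] [NormedSpace ℝ X]
    (q ℓ : ℕ) (h t τ δ ρ L : ℝ)
    (ht : 0 ≤ t) (hδ : 0 < δ) (hLpos : 0 < L)
    (S : X → EuclideanSpace ℝ (Fin q))
    (γ : ℝ → ℝ) (hγ : ContDiff ℝ 1 γ) (hγ0 : γ 0 = 0)
    -- mild solution map of the PDE, linear in the input:
    (sol : (ℝ → EuclideanSpace ℝ (Fin ℓ)) → ℝ → X)
    (hlin : ∀ ζ₁ ζ₂ : ℝ → EuclideanSpace ℝ (Fin ℓ), ∀ s : ℝ,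
      sol (ζ₁ - ζ₂) s = sol ζ₁ s - sol ζ₂ s)
    -- BIBO stability of the PDE w.r.t. S:
    (hBIBO : ∀ ζ : ℝ → EuclideanSpace ℝ (Fin ℓ), ∀ s : ℝ, 0 ≤ s →
      ‖S (sol ζ s)‖ ≤ γ (⨆ σ : Set.Icc (-h) s, ‖ζ σ‖))
    -- generalized Lipschitz property of S, with constant L for (reference x̄, radius ρ):
    (x' : X)
    (hS : ∀ x₁ x₂ : X, ‖x₁ - x'‖ < ρ → ‖x₂ - x'‖ < ρ →
      ‖S x₁ - S x₂‖ ≤ L * ‖S (x₁ - x₂)‖)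
    (ζ₁ ζ₂ : ℝ → EuclideanSpace ℝ (Fin ℓ)) (ξref : EuclideanSpace ℝ (Fin ℓ))
    (hagree : ∀ s : ℝ, -h ≤ s → s ≤ t → ζ₁ s = ζ₂ s)
    (hclose : ∀ s : ℝ, t ≤ s → s ≤ t + τ → ‖ζ₁ s - ξref‖ < δ ∧ ‖ζ₂ s - ξref‖ < δ)
    (hstate : ∀ s : ℝ, t ≤ s → s ≤ t + τ → ‖sol ζ₁ s - x'‖ < ρ ∧ ‖sol ζ₂ s - x'‖ < ρ) :
    ∀ s : ℝ, t ≤ s → s ≤ t + τ →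
      ‖S (sol ζ₁ s) - S (sol ζ₂ s)‖ ≤
        L * (⨆ σ : Set.Icc (0:ℝ) (2 * δ), |deriv γ σ|) *
          (⨆ σ : Set.Icc t (t + τ), ‖ζ₁ σ - ζ₂ σ‖) := by
  intro s hts hsτ
  set K := ⨆ σ : Icc (0:ℝ) (2 * δ), |deriv γ σ|
  set N := ⨆ σ : Icc t (t + τ), ‖ζ₁ σ - ζ₂ σ‖
  set M := ⨆ σ : Icc (-h) s, ‖ζ₁ σ - ζ₂ σ‖
  have hzero : ∀ σ ∈ Icc (-h) t, ‖ζ₁ σ - ζ₂ σ‖ = 0 := fun σ hσ => by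
    rw [hagree σ hσ.1 hσ.2, sub_self, norm_zero]
  have hbound : ∀ σ ∈ Icc t (t + τ), ‖ζ₁ σ - ζ₂ σ‖ ≤ 2 * δ := fun σ hσ => by
    obtain ⟨h₁, h₂⟩ := hclose σ hσ.1 hσ.2
    rw [← dist_eq_norm]
    linarith [dist_triangle_right (ζ₁ σ) (ζ₂ σ) ξref, dist_eq_norm (ζ₁ σ) ξref,
      dist_eq_norm (ζ₂ σ) ξref]
  have hM0 : 0 ≤ M := Real.iSup_nonneg fun _ => norm_nonneg _
  have hMN : M ≤ N := iSup_Icc_le_of_eq_zero_of_le hzero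
    (fun σ hσ => le_ciSup (f := fun σ : Icc t (t + τ) => ‖ζ₁ σ - ζ₂ σ‖)
      ⟨2 * δ, by rintro _ ⟨σ, rfl⟩; exact hbound σ σ.2⟩ ⟨σ, hσ⟩)
    (Real.iSup_nonneg fun _ => norm_nonneg _) hsτ
  have hM2δ : M ≤ 2 * δ := iSup_Icc_le_of_eq_zero_of_le hzero hbound (by positivity) hsτ
  have hdiff : ‖S (sol ζ₁ s - sol ζ₂ s)‖ ≤ γ M := by
    simpa only [hlin, Pi.sub_apply] using hBIBO (ζ₁ - ζ₂) s (ht.trans hts)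
  have hK0 : 0 ≤ K := Real.iSup_nonneg fun _ => abs_nonneg _
  obtain ⟨hx₁, hx₂⟩ := hstate s hts hsτ
  calc ‖S (sol ζ₁ s) - S (sol ζ₂ s)‖ ≤ L * ‖S (sol ζ₁ s - sol ζ₂ s)‖ := hS _ _ hx₁ hx₂
    _ ≤ L * (K * M) := by
      gcongr
      exact hdiff.trans (hγ.le_iSup_abs_deriv_mul hγ0 ⟨hM0, hM2δ⟩)
    _ ≤ L * K * N := by
      rw [mul_assoc]
      gcongr

/-- Step 3 of the proof of Theorem 2: combining the generalized
Lipschitz property of `S`, the BIBO bound `‖S(z(t))‖ ≤ γ(sup_{s≤t}‖ζ(s)‖)` with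
`γ ∈ C¹`, `γ(0) = 0`, and linearity of the mild-solution map, two solutions driven by
inputs coinciding up to time `t` and staying `δ`-close afterwards satisfy
`‖S(x₁(s)) - S(x₂(s))‖ ≤ L ⬝ (sup_{[0,2δ]}|γ'|) ⬝ ‖(ζ₁-ζ₂)|_{[t,t+τ]}‖_∞` on `[t,t+τ]`. -/
theorem nonlinear_observation_Lipschitz_estimate
    {X : Type*} [NormedAddCommGroup X] [NormedSpace ℝ X]
    (q ℓ : ℕ) (h t τ δ ρ L : ℝ)
    (hh : 0 ≤ h) (ht : 0 ≤ t) (hτ : 0 < τ) (hδ : 0 < δ) (hρ : 0 < ρ) (hLpos : 0 < L)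
    (S : X → EuclideanSpace ℝ (Fin q))
    (γ : ℝ → ℝ) (hγ : ContDiff ℝ 1 γ) (hγ0 : γ 0 = 0)
    -- mild solution map of the PDE, linear in the input:
    (sol : (ℝ → EuclideanSpace ℝ (Fin ℓ)) → ℝ → X)
    (hlin : ∀ ζ₁ ζ₂ : ℝ → EuclideanSpace ℝ (Fin ℓ), ∀ s : ℝ,
      sol (ζ₁ - ζ₂) s = sol ζ₁ s - sol ζ₂ s)
    -- BIBO stability of the PDE w.r.t. S:
    (hBIBO : ∀ ζ : ℝ → EuclideanSpace ℝ (Fin ℓ), ∀ s : ℝ, 0 ≤ s →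
      ‖S (sol ζ s)‖ ≤ γ (⨆ σ : Set.Icc (-h) s, ‖ζ σ‖))
    -- generalized Lipschitz property of S, with constant L for (reference x̄, radius ρ):
    (x' : X)
    (hS : ∀ x₁ x₂ : X, ‖x₁ - x'‖ < ρ → ‖x₂ - x'‖ < ρ →
      ‖S x₁ - S x₂‖ ≤ L * ‖S (x₁ - x₂)‖)
    (ζ₁ ζ₂ : ℝ → EuclideanSpace ℝ (Fin ℓ)) (ξref : EuclideanSpace ℝ (Fin ℓ))
    (hcont₁ : Continuous ζ₁) (hcont₂ : Continuous ζ₂)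
    (hagree : ∀ s : ℝ, -h ≤ s → s ≤ t → ζ₁ s = ζ₂ s)
    (hclose : ∀ s : ℝ, t ≤ s → s ≤ t + τ → ‖ζ₁ s - ξref‖ < δ ∧ ‖ζ₂ s - ξref‖ < δ)
    (hstate : ∀ s : ℝ, t ≤ s → s ≤ t + τ → ‖sol ζ₁ s - x'‖ < ρ ∧ ‖sol ζ₂ s - x'‖ < ρ) :
    ∀ s : ℝ, t ≤ s → s ≤ t + τ →
      ‖S (sol ζ₁ s) - S (sol ζ₂ s)‖ ≤
        L * (⨆ σ : Set.Icc (0:ℝ) (2 * δ), |deriv γ σ|) *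
          (⨆ σ : Set.Icc t (t + τ), ‖ζ₁ σ - ζ₂ σ‖) :=
  nonlinear_observation_Lipschitz_estimate_general q ℓ h t τ δ ρ L ht hδ hLpos S γ hγ hγ0 sol hlin
    hBIBO x' hS ζ₁ ζ₂ ξref hagree hclose hstate
end

section
/- Let k : [0,∞) → ℝ be defined along a trajectory by k(t) = 1/(1 − φ(t)²‖e(t)‖²), where φ ∈ Φ₁ and e is continuous with φ(t)‖e(t)‖ < 1 for all t ≥ 0. If there exists ε > 0 such that ‖e(t)‖ ≤ φ(t)^{−1} − ε for all t > 0 and φ is bounded by Φ := sup φ, then k is bounded: k(t) ≤ 1/(εφ(t)(2 − εφ(t))) ≤ 1/(εφ(t)) ≤ 1/(ε·inf_{t>0}φ̄) for a positive lower bound φ̄, hence sup_{t≥0} k(t) < ∞. -/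
/-! On `[0, ∞)` the denominator `1 - φ²‖e‖²` of the gain is continuous and positive (`φ ≥ 0` there
by continuity at `0`). Staying `ε` away from the boundary gives `φ‖e‖ ≤ 1 - εφ`, hence
`1 - φ²‖e‖² ≥ εφ`, and `φ` is eventually bounded below by a positive constant since its `liminf`
is positive. So the denominator is bounded below by a positive constant on a tail `[T, ∞)`, and on
the compact `[0, T]` by its minimum. -/

open Filter Set

lemma one_sub_sq_mul_sq_pos {a x : ℝ} (ha : 0 ≤ a) (hx : 0 ≤ x) (h : a * x < 1) :
    0 < 1 - a ^ 2 * x ^ 2 := by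
  nlinarith [mul_nonneg ha hx]

lemma mul_le_one_sub_sq_mul_sq {a x ε : ℝ} (ha : 0 < a) (hx : 0 ≤ x) (hε : 0 ≤ ε)
    (hxε : x ≤ a⁻¹ - ε) : ε * a ≤ 1 - a ^ 2 * x ^ 2 := by
  have hax : a * x ≤ 1 - ε * a := by
    calc a * x ≤ a * (a⁻¹ - ε) := mul_le_mul_of_nonneg_left hxε ha.le
      _ = 1 - ε * a := by rw [mul_sub, mul_inv_cancel₀ ha.ne', mul_comm]
  nlinarith [mul_nonneg ha.le hx, mul_nonneg hε ha.le]

lemma Filter.exists_pos_eventually_le_of_pos_liminf {α : Type*} {l : Filter α} {f : α → ℝ}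
    (hf : IsBoundedUnder (· ≥ ·) l f) (h : 0 < liminf f l) :
    ∃ c, 0 < c ∧ ∀ᶠ x in l, c ≤ f x :=
  ⟨liminf f l / 2, half_pos h,
    (eventually_lt_of_lt_liminf (half_lt_self h) hf).mono fun _ hx => hx.le⟩

lemma nonneg_of_continuousWithinAt_of_pos_Ioi {f : ℝ → ℝ} {a : ℝ}
    (hf : ContinuousWithinAt f (Ioi a) a) (hpos : ∀ t, a < t → 0 < f t) : 0 ≤ f a :=
  ge_of_tendsto hf (eventually_nhdsWithin_of_forall fun t ht => (hpos t ht).le)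

lemma exists_pos_le_of_continuousOn_Ici {g : ℝ → ℝ} {a c : ℝ} (hg : ContinuousOn g (Ici a))
    (hpos : ∀ t, a ≤ t → 0 < g t) (hc : 0 < c) (hev : ∀ᶠ t in atTop, c ≤ g t) :
    ∃ δ, 0 < δ ∧ ∀ t, a ≤ t → δ ≤ g t := by
  obtain ⟨T, hT⟩ := eventually_atTop.mp hev
  obtain ⟨t₀, ht₀, hmin⟩ := isCompact_Icc.exists_isMinOn
    (nonempty_Icc.mpr (le_max_left a T)) (hg.mono Icc_subset_Ici_self)
  refine ⟨min (g t₀) c, lt_min (hpos t₀ ht₀.1) hc, fun t ht => ?_⟩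
  rcases le_total t (max a T) with htT | htT
  · exact (min_le_left _ _).trans (hmin ⟨ht, htT⟩)
  · exact (min_le_right _ _).trans (hT t ((le_max_right a T).trans htT))

theorem funnel_gain_bounded_general
    {m : ℕ} (φ : ℝ → ℝ) (e : ℝ → EuclideanSpace ℝ (Fin m))
    (hφC1 : ContDiff ℝ 1 φ)
    (hφpos : ∀ t : ℝ, 0 < t → 0 < φ t)
    (hφliminf : 0 < Filter.liminf φ Filter.atTop)
    (he : Continuous e)
    (hfunnel : ∀ t : ℝ, 0 ≤ t → φ t * ‖e t‖ < 1)
    (ε : ℝ) (hε : 0 < ε)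
    (haway : ∀ t : ℝ, 0 < t → ‖e t‖ ≤ (φ t)⁻¹ - ε) :
    ∃ K : ℝ, ∀ t : ℝ, 0 ≤ t → 1 / (1 - φ t ^ 2 * ‖e t‖ ^ 2) ≤ K := by
  have hφ : Continuous φ := hφC1.continuous
  have hφnonneg : ∀ t, 0 ≤ t → 0 ≤ φ t := fun t ht => ht.eq_or_lt.elim
    (fun h => h ▸ nonneg_of_continuousWithinAt_of_pos_Ioi hφ.continuousWithinAt hφpos)
    (fun h => (hφpos t h).le)
  obtain ⟨c, hc, hφc⟩ := exists_pos_eventually_le_of_pos_liminf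
    (isBoundedUnder_of_eventually_ge ((eventually_gt_atTop 0).mono fun t ht => (hφpos t ht).le))
    hφliminf
  have htail : ∀ᶠ t in atTop, ε * c ≤ 1 - φ t ^ 2 * ‖e t‖ ^ 2 := by
    filter_upwards [hφc, eventually_gt_atTop 0] with t hct ht
    exact (mul_le_mul_of_nonneg_left hct hε.le).trans
      (mul_le_one_sub_sq_mul_sq (hφpos t ht) (norm_nonneg _) hε.le (haway t ht))
  obtain ⟨δ, hδ, hδle⟩ := exists_pos_le_of_continuousOn_Ici (a := 0) (by fun_prop)
    (fun t ht => one_sub_sq_mul_sq_pos (hφnonneg t ht) (norm_nonneg _) (hfunnel t ht))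
    (mul_pos hε hc) htail
  exact ⟨1 / δ, fun t ht => one_div_le_one_div_of_le hδ (hδle t ht)⟩

/-- if the error `e` evolves strictly inside the funnel and is uniformly
bounded away from the funnel boundary (`‖e(t)‖ ≤ φ(t)⁻¹ - ε`), where `φ ∈ Φ₁` (i.e. `φ` is
`C¹`, bounded, positive for `t > 0` and `liminf_{t→∞} φ(t) > 0`), then the funnel gain
`k(t) = 1/(1 - φ(t)²‖e(t)‖²)` is bounded. -/
theorem funnel_gain_bounded
    {m : ℕ} (φ : ℝ → ℝ) (e : ℝ → EuclideanSpace ℝ (Fin m))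
    (hφC1 : ContDiff ℝ 1 φ)
    (hφbdd : ∃ M : ℝ, ∀ t : ℝ, 0 ≤ t → |φ t| ≤ M)
    (hφpos : ∀ t : ℝ, 0 < t → 0 < φ t)
    (hφliminf : 0 < Filter.liminf φ Filter.atTop)
    (he : Continuous e)
    (hfunnel : ∀ t : ℝ, 0 ≤ t → φ t * ‖e t‖ < 1)
    (ε : ℝ) (hε : 0 < ε)
    (haway : ∀ t : ℝ, 0 < t → ‖e t‖ ≤ (φ t)⁻¹ - ε) :
    ∃ K : ℝ, ∀ t : ℝ, 0 ≤ t → 1 / (1 - φ t ^ 2 * ‖e t‖ ^ 2) ≤ K :=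
  funnel_gain_bounded_general φ e hφC1 hφpos hφliminf he hfunnel ε hε haway
end
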